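/- arXiv:2507.14068 — 3 statements merged into one kernel-verified Lean document; each statement's English description precedes it below -/
import Mathlib

section
/- Let n ≥ 1. Then the number of join-irreducible elements of Tr([n]) and the number of meet-irreducible elements of Tr([n]) are both equal to the binomial coefficient C(n+1, 2) = n(n+1)/2. -/
/-- A transfer system on a finite lattice `L` (with trivial group action): a partial order
refining `≤` which is closed under restriction. -/
structure TransferSystem (L : Type*) [Lattice L] : Type _ where
  rel : L → L → Prop
  refl : ∀ x, rel x x
  trans : ∀ {x y z}, rel x y → rel y z → rel x z
  le_of_rel : ∀ {x y}, rel x y → x ≤ y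
  restrict : ∀ {x y x'}, rel x y → x' ≤ y → rel (x ⊓ x') x'

namespace TransferSystem

variable {L : Type*} [Lattice L]

theorem ext' {S T : TransferSystem L} (h : S.rel = T.rel) : S = T := by
  cases S; cases T; simpa using h

instance : PartialOrder (TransferSystem L) where
  le S T := ∀ ⦃x y : L⦄, S.rel x y → T.rel x y
  le_refl S := fun _ _ h => h
  le_trans S T U h1 h2 := fun _ _ h => h2 (h1 h)
  le_antisymm S T h1 h2 :=
    ext' (by funext x y; exact propext ⟨fun h => h1 h, fun h => h2 h⟩)

/-- The intersection of a set of transfer systems. -/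
def sInfTS (s : Set (TransferSystem L)) : TransferSystem L where
  rel x y := x ≤ y ∧ ∀ T ∈ s, T.rel x y
  refl x := ⟨le_refl x, fun T _ => T.refl x⟩
  trans h1 h2 := ⟨h1.1.trans h2.1, fun T hT => T.trans (h1.2 T hT) (h2.2 T hT)⟩
  le_of_rel h := h.1
  restrict h hle := ⟨inf_le_right, fun T hT => T.restrict (h.2 T hT) hle⟩

instance : InfSet (TransferSystem L) := ⟨sInfTS⟩

theorem sInf_rel (s : Set (TransferSystem L)) (x y : L) :
    (sInf s).rel x y ↔ x ≤ y ∧ ∀ T ∈ s, T.rel x y := Iff.rfl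

/-- The complete lattice of transfer systems, ordered by refinement. -/
instance : CompleteLattice (TransferSystem L) :=
  completeLatticeOfInf _ (fun s =>
    ⟨fun T hT _ _ h => h.2 T hT,
     fun T hT _ _ h => ((sInf_rel s _ _).2 ⟨T.le_of_rel h, fun S hS => hT hS h⟩)⟩)

end TransferSystem

/-- The codensity `ρ` of (the reduced formal context of) a finite lattice `α`:
the number of pairs `(A, B)` with `A` join-irreducible, `B` meet-irreducible and `A ≰ B`,
divided by the product of the numbers of join-irreducibles and meet-irreducibles. -/
noncomputable def codensity (α : Type*) [Lattice α] : ℚ :=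
  (Nat.card {p : α × α // SupIrred p.1 ∧ InfIrred p.2 ∧ ¬ p.1 ≤ p.2} : ℚ) /
    ((Nat.card {a : α // SupIrred a} : ℚ) * (Nat.card {a : α // InfIrred a} : ℚ))


/-!
A transfer system generated by a single transfer `a → b` with `a < b` has a unique lower cover,
obtained by dropping `a → b`, so it is join-irreducible; every transfer system is the join of the
ones generated by its transfers, so there are no other join-irreducibles. Dually, on a chain the
largest transfer system `avoid a b` not containing `a → b` has a unique upper cover (adjoin
`a → b`), and every transfer system `T` is the meet of the `avoid a b` above it: a transfer
`x → y` missing from `T` is excluded by `avoid x b` for the least `b` with `x ↛ b`. Both kinds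
of irreducibles are therefore indexed by the pairs `a < b`, of which `[n]` has `C(n+1, 2)`.
-/

section UniqueCover

variable {α : Type*}

theorem supIrred_of_forall_lt_iff_le [SemilatticeSup α] {a b : α} (h : ∀ c, c < a ↔ c ≤ b) :
    SupIrred a := by
  have hba : b < a := (h b).2 le_rfl
  refine ⟨fun ha => ha.not_lt hba, fun c d hcd => ?_⟩
  by_contra! hne
  have hc : c ≤ b := (h c).1 ((hcd ▸ le_sup_left : c ≤ a).lt_of_ne hne.1)
  have hd : d ≤ b := (h d).1 ((hcd ▸ le_sup_right : d ≤ a).lt_of_ne hne.2)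
  exact hba.not_ge (hcd ▸ sup_le hc hd)

theorem infIrred_of_forall_lt_iff_le [SemilatticeInf α] {a b : α} (h : ∀ c, a < c ↔ b ≤ c) :
    InfIrred a :=
  supIrred_toDual.1 (supIrred_of_forall_lt_iff_le (a := OrderDual.toDual a) fun c => h c)

end UniqueCover

theorem natCard_fst_lt_snd (α : Type*) [LinearOrder α] [Fintype α] :
    Nat.card {p : α × α // p.1 < p.2} = (Fintype.card α).choose 2 := by
  classical
  rw [Nat.card_eq_fintype_card, Fintype.card_subtype, ← Finset.univ_product_univ,
    Finset.card_product_filter_lt, Finset.card_univ]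

namespace TransferSystem

section Lattice

variable {L : Type*} [Lattice L] {S T : TransferSystem L} {a b x y z : L}

theorem le_iff : S ≤ T ↔ ∀ ⦃x y⦄, S.rel x y → T.rel x y := Iff.rfl

theorem rel_of_le_of_le (h : T.rel x y) (hxz : x ≤ z) (hzy : z ≤ y) : T.rel x z := by
  simpa [inf_eq_left.2 hxz] using T.restrict h hzy

/-- The identities together with the restrictions `a ⊓ y → y` of transfers out of `a`, for
`y ∈ s`; for `s = Iic b` this is the transfer system generated by `a → b`. -/
def restrictions (a : L) (s : LowerSet L) : TransferSystem L where
  rel x y := x = y ∨ (x = a ⊓ y ∧ y ∈ s)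
  refl _ := Or.inl rfl
  trans := by
    rintro x y z (rfl | ⟨rfl, hy⟩) (rfl | ⟨rfl, hz⟩)
    · exact Or.inl rfl
    · exact Or.inr ⟨rfl, hz⟩
    · exact Or.inr ⟨rfl, hy⟩
    · exact Or.inr ⟨inf_left_idem a z, hz⟩
  le_of_rel := by
    rintro x y (rfl | ⟨rfl, -⟩)
    exacts [le_rfl, inf_le_right]
  restrict := by
    rintro x y x' (rfl | ⟨rfl, hy⟩) hx'
    · exact Or.inl (inf_eq_right.2 hx')
    · exact Or.inr ⟨by rw [inf_assoc, inf_eq_right.2 hx'], s.lower hx' hy⟩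

theorem restrictions_mono {s t : LowerSet L} (hst : s ≤ t) :
    restrictions a s ≤ restrictions a t := by
  rintro x y (rfl | ⟨rfl, hy⟩)
  exacts [Or.inl rfl, Or.inr ⟨rfl, hst hy⟩]

def gen (a b : L) : TransferSystem L := restrictions a (LowerSet.Iic b)

theorem rel_gen_self (hab : a ≤ b) : (gen a b).rel a b :=
  Or.inr ⟨(inf_eq_left.2 hab).symm, le_rfl⟩

theorem gen_le_iff (hab : a ≤ b) : gen a b ≤ T ↔ T.rel a b := by
  refine ⟨fun h => h (rel_gen_self hab), fun h => ?_⟩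
  rintro x y (rfl | ⟨rfl, hy⟩)
  exacts [T.refl x, T.restrict h hy]

theorem isMin_gen_self : IsMin (gen a a) :=
  fun T _ => (gen_le_iff le_rfl).2 (T.refl a)

theorem lt_gen_iff (hab : a < b) : S < gen a b ↔ S ≤ restrictions a (LowerSet.Iio b) := by
  constructor
  · rintro ⟨hS, hSgen⟩
    intro x y hxy
    rcases hS hxy with rfl | ⟨rfl, hy⟩
    · exact Or.inl rfl
    refine Or.inr ⟨rfl, lt_of_le_of_ne hy ?_⟩
    rintro rfl
    rw [inf_eq_left.2 hab.le] at hxy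
    exact hSgen ((gen_le_iff hab.le).2 hxy)
  · intro hS
    have hlt : restrictions a (LowerSet.Iio b) < gen a b := by
      refine lt_of_le_not_ge (restrictions_mono fun _ => le_of_lt) fun h => ?_
      rcases h (rel_gen_self hab.le) with hab' | ⟨-, hbb⟩
      exacts [hab.ne hab', lt_irrefl b hbb]
    exact hS.trans_lt hlt

theorem supIrred_gen (hab : a < b) : SupIrred (gen a b) :=
  supIrred_of_forall_lt_iff_le fun _ => lt_gen_iff hab

theorem gen_inj {a' b' : L} (hab : a < b) (hab' : a' < b') :
    gen a b = gen a' b' ↔ a = a' ∧ b = b' := by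
  refine ⟨fun h => ?_, fun h => h.1 ▸ h.2 ▸ rfl⟩
  obtain ⟨ha, hbb'⟩ := (h ▸ rel_gen_self hab.le : (gen a' b').rel a b).resolve_left hab.ne
  obtain ⟨-, hb'b⟩ := (h ▸ rel_gen_self hab'.le : (gen a b).rel a' b').resolve_left hab'.ne
  obtain rfl : b = b' := le_antisymm hbb' hb'b
  exact ⟨ha.trans (inf_eq_left.2 hab'.le), rfl⟩

theorem finset_sup_gen_eq (T : TransferSystem L) {s : Finset (L × L)}
    (hs : ∀ p, p ∈ s ↔ T.rel p.1 p.2) : s.sup (fun p => gen p.1 p.2) = T := by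
  refine le_antisymm (Finset.sup_le fun p hp => ?_) fun x y hxy => ?_
  · exact (gen_le_iff (T.le_of_rel ((hs p).1 hp))).2 ((hs p).1 hp)
  · exact Finset.le_sup (f := fun p => gen p.1 p.2) ((hs (x, y)).2 hxy)
      (rel_gen_self (T.le_of_rel hxy))

theorem exists_gen_of_supIrred [Finite L] (hT : SupIrred T) : ∃ a b, a < b ∧ T = gen a b := by
  let s := (Set.toFinite {p : L × L | T.rel p.1 p.2}).toFinset
  obtain ⟨⟨a, b⟩, hab, hT_eq⟩ :=
    hT.finset_sup_eq (finset_sup_gen_eq T (s := s) fun _ => by simp [s])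
  refine ⟨a, b, lt_of_le_of_ne (T.le_of_rel (by simpa [s] using hab)) ?_, hT_eq.symm⟩
  rintro rfl
  exact hT.not_isMin (hT_eq ▸ isMin_gen_self)

theorem natCard_supIrred [Finite L] :
    Nat.card {T : TransferSystem L // SupIrred T} = Nat.card {p : L × L // p.1 < p.2} := by
  refine (Nat.card_eq_of_bijective
    (fun p => ⟨gen p.1.1 p.1.2, supIrred_gen p.2⟩) ⟨?_, ?_⟩).symm
  · rintro ⟨⟨a, b⟩, hab⟩ ⟨⟨a', b'⟩, hab'⟩ h
    obtain ⟨rfl, rfl⟩ := (gen_inj hab hab').1 (congrArg Subtype.val h)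
    rfl
  · rintro ⟨T, hT⟩
    obtain ⟨a, b, hab, rfl⟩ := exists_gen_of_supIrred hT
    exact ⟨⟨(a, b), hab⟩, rfl⟩

end Lattice

section LinearOrder

variable {L : Type*} [LinearOrder L] {S T : TransferSystem L} {a b : L}

def avoid (a b : L) : TransferSystem L where
  rel x y := x ≤ y ∧ ¬(a ≤ x ∧ x < b ∧ b ≤ y)
  refl x := ⟨le_rfl, fun ⟨_, hxb, hbx⟩ => (hxb.trans_le hbx).false⟩
  trans := by
    rintro x y z ⟨hxy, hxy'⟩ ⟨hyz, hyz'⟩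
    refine ⟨hxy.trans hyz, fun ⟨hax, hxb, hbz⟩ => ?_⟩
    rcases le_or_gt b y with hby | hyb
    exacts [hxy' ⟨hax, hxb, hby⟩, hyz' ⟨hax.trans hxy, hyb, hbz⟩]
  le_of_rel h := h.1
  restrict := by
    rintro x y x' ⟨-, hxy'⟩ hx'y
    refine ⟨inf_le_right, fun ⟨ha, hb, hbx'⟩ => ?_⟩
    rcases le_total x x' with hxx' | hx'x
    · rw [inf_eq_left.2 hxx'] at ha hb
      exact hxy' ⟨ha, hb, hbx'.trans hx'y⟩
    · rw [inf_eq_right.2 hx'x] at hb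
      exact (hb.trans_le hbx').false

theorem not_rel_avoid (hab : a < b) : ¬(avoid a b).rel a b :=
  fun h => h.2 ⟨le_rfl, hab, le_rfl⟩

theorem rel_of_avoid_lt (h : avoid a b < S) : S.rel a b := by
  obtain ⟨x, y, hxy, hxy'⟩ : ∃ x y, S.rel x y ∧ ¬(avoid a b).rel x y := by
    simpa [le_iff] using h.not_ge
  obtain ⟨hax, hxb, hby⟩ : a ≤ x ∧ x < b ∧ b ≤ y :=
    not_not.1 fun hc => hxy' ⟨S.le_of_rel hxy, hc⟩
  have hax' : S.rel a x := h.le ⟨hax, fun ⟨_, _, hbx⟩ => (hxb.trans_le hbx).false⟩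
  exact S.trans hax' (rel_of_le_of_le hxy hxb.le hby)

theorem avoid_lt_iff (hab : a < b) : avoid a b < S ↔ avoid a b ⊔ gen a b ≤ S := by
  refine ⟨fun h => sup_le h.le ((gen_le_iff hab.le).2 (rel_of_avoid_lt h)), fun h => ?_⟩
  refine lt_of_le_of_ne (le_sup_left.trans h) fun hS => not_rel_avoid hab ?_
  exact hS ▸ (le_sup_right.trans h) (rel_gen_self hab.le)

theorem infIrred_avoid (hab : a < b) : InfIrred (avoid a b) :=
  infIrred_of_forall_lt_iff_le fun _ => avoid_lt_iff hab

theorem avoid_inj {a' b' : L} (hab : a < b) (hab' : a' < b') :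
    avoid a b = avoid a' b' ↔ a = a' ∧ b = b' := by
  refine ⟨fun h => ?_, fun h => h.1 ▸ h.2 ▸ rfl⟩
  have h₁ : a' ≤ a ∧ a < b' ∧ b' ≤ b :=
    not_not.1 fun hc => (h ▸ not_rel_avoid hab) ⟨hab.le, hc⟩
  have h₂ : a ≤ a' ∧ a' < b ∧ b ≤ b' :=
    not_not.1 fun hc => (h ▸ not_rel_avoid hab') ⟨hab'.le, hc⟩
  exact ⟨le_antisymm h₂.1 h₁.1, le_antisymm h₂.2.2 h₁.2.2⟩

theorem le_avoid (hb : ∀ c, a ≤ c → c < b → T.rel a c) (hab : ¬T.rel a b) :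
    T ≤ avoid a b := by
  refine fun x y hxy => ⟨T.le_of_rel hxy, fun ⟨hax, hxb, hby⟩ => hab ?_⟩
  exact T.trans (hb x hax hxb) (rel_of_le_of_le hxy hxb.le hby)

theorem finset_inf_avoid_eq [WellFoundedLT L] (T : TransferSystem L) {s : Finset (L × L)}
    (hs : ∀ p, p ∈ s ↔ p.1 < p.2 ∧ T ≤ avoid p.1 p.2) :
    s.inf (fun p => avoid p.1 p.2) = T := by
  refine le_antisymm (fun x y hxy => ?_) (Finset.le_inf fun p hp => ((hs p).1 hp).2)
  by_contra hTxy
  have hxy' : x < y := lt_of_le_of_ne ((s.inf fun p => avoid p.1 p.2).le_of_rel hxy)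
    fun h => hTxy (h ▸ T.refl x)
  obtain ⟨b, ⟨hxb, hTxb⟩, hmin⟩ :=
    wellFounded_lt.has_min {c | x < c ∧ ¬T.rel x c} ⟨y, hxy', hTxy⟩
  have hTle : T ≤ avoid x b := by
    refine le_avoid (fun c hxc hcb => ?_) hTxb
    rcases hxc.eq_or_lt with rfl | hxc
    exacts [T.refl x, not_not.1 fun h => hmin c ⟨hxc, h⟩ hcb]
  have hby : b ≤ y := not_lt.1 (hmin y ⟨hxy', hTxy⟩)
  exact (Finset.inf_le (f := fun p => avoid p.1 p.2) ((hs (x, b)).2 ⟨hxb, hTle⟩) hxy).2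
    ⟨le_rfl, hxb, hby⟩

theorem exists_avoid_of_infIrred [Finite L] (hT : InfIrred T) :
    ∃ a b, a < b ∧ T = avoid a b := by
  let s := (Set.toFinite {p : L × L | p.1 < p.2 ∧ T ≤ avoid p.1 p.2}).toFinset
  obtain ⟨⟨a, b⟩, hab, hT_eq⟩ :=
    hT.finset_inf_eq (finset_inf_avoid_eq T (s := s) fun _ => by simp [s])
  exact ⟨a, b, (by simpa [s] using hab : a < b ∧ _).1, hT_eq.symm⟩

theorem natCard_infIrred [Finite L] :
    Nat.card {T : TransferSystem L // InfIrred T} = Nat.card {p : L × L // p.1 < p.2} := by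
  refine (Nat.card_eq_of_bijective
    (fun p => ⟨avoid p.1.1 p.1.2, infIrred_avoid p.2⟩) ⟨?_, ?_⟩).symm
  · rintro ⟨⟨a, b⟩, hab⟩ ⟨⟨a', b'⟩, hab'⟩ h
    obtain ⟨rfl, rfl⟩ := (avoid_inj hab hab').1 (congrArg Subtype.val h)
    rfl
  · rintro ⟨T, hT⟩
    obtain ⟨a, b, hab, rfl⟩ := exists_avoid_of_infIrred hT
    exact ⟨⟨(a, b), hab⟩, rfl⟩

end LinearOrder

end TransferSystem

theorem card_irred_chain_general (n : ℕ) :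
    Nat.card {T : TransferSystem (Fin (n + 1)) // SupIrred T} = n * (n + 1) / 2 ∧
    Nat.card {T : TransferSystem (Fin (n + 1)) // InfIrred T} = n * (n + 1) / 2 ∧
    n * (n + 1) / 2 = (n + 1).choose 2 := by
  have hchoose : (n + 1).choose 2 = n * (n + 1) / 2 := by
    rw [Nat.choose_two_right, Nat.add_sub_cancel, Nat.mul_comm]
  have hpairs : Nat.card {p : Fin (n + 1) × Fin (n + 1) // p.1 < p.2} = n * (n + 1) / 2 := by
    rw [natCard_fst_lt_snd, Fintype.card_fin, hchoose]
  exact ⟨TransferSystem.natCard_supIrred.trans hpairs,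
    TransferSystem.natCard_infIrred.trans hpairs, hchoose.symm⟩

/-- For `n ≥ 1`, the numbers of join-irreducible and of meet-irreducible
elements of `Tr([n])` both equal `C(n+1, 2) = n(n+1)/2`. -/
theorem card_irred_chain (n : ℕ) (hn : 1 ≤ n) :
    Nat.card {T : TransferSystem (Fin (n + 1)) // SupIrred T} = n * (n + 1) / 2 ∧
    Nat.card {T : TransferSystem (Fin (n + 1)) // InfIrred T} = n * (n + 1) / 2 ∧
    n * (n + 1) / 2 = (n + 1).choose 2 :=
  card_irred_chain_general n
end

section
/- Let n ≥ 1. Then the codensity of the lattice of transfer systems on the chain [n] satisfies ρ(Tr([n])) = (n+2)(n+3)/(6n(n+1)). Consequently, ρ(Tr([n])) tends to 1/6 as n tends to infinity. -/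
/-! A transfer system on a chain is the join of the systems `single i j` generated by one of
its transfers `i → j`, and the meet of the systems `preservingIcc a b` under which it keeps an
interval `[a, b]` closed. Everything below `single i j` (above `preservingIcc a b`) is a chain,
so these are exactly the join- (meet-) irreducibles, indexed by `i < j` and by `a ≤ b < ⊤`. As
`single i j ≰ preservingIcc a b` iff `a ≤ i ≤ b < j`, on `[n]` the three counts are
`C(n+1, 2)`, `C(n+1, 2)` and `C(n+3, 4)` by the hockey-stick identity. -/

theorem supIrred_of_isChain_Iic {α : Type*} [Lattice α] {a : α} (ha : ¬IsMin a)
    (hchain : IsChain (· ≤ ·) (Set.Iic a)) : SupIrred a := by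
  refine ⟨ha, fun b c hbc => ?_⟩
  have hb : b ≤ a := hbc ▸ le_sup_left
  have hc : c ≤ a := hbc ▸ le_sup_right
  rcases hchain.total hb hc with h | h
  · exact Or.inr (by rwa [sup_eq_right.2 h] at hbc)
  · exact Or.inl (by rwa [sup_eq_left.2 h] at hbc)

theorem infIrred_of_isChain_Ici {α : Type*} [Lattice α] {a : α} (ha : ¬IsMax a)
    (hchain : IsChain (· ≤ ·) (Set.Ici a)) : InfIrred a :=
  supIrred_toDual.1 (supIrred_of_isChain_Iic (α := αᵒᵈ) ha hchain.symm)

namespace TransferSystem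

theorem exists_rel_not_rel_of_not_le {L : Type*} [Lattice L] {S T : TransferSystem L}
    (h : ¬S ≤ T) : ∃ x y, S.rel x y ∧ ¬T.rel x y := by
  by_contra! h'
  exact h h'

section LinearOrder

variable {L : Type*} [LinearOrder L] {S T U : TransferSystem L} {i j k a b x y : L}

theorem rel_of_rel_of_le (h : S.rel x y) (hxz : x ≤ k) (hzy : k ≤ y) : S.rel x k := by
  simpa [inf_eq_left.2 hxz] using S.restrict h hzy

def single (i j : L) : TransferSystem L where
  rel x y := x = y ∨ (x = i ∧ i ≤ y ∧ y ≤ j)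
  refl _ := Or.inl rfl
  trans := by
    rintro x y z (rfl | ⟨rfl, hxy, hyj⟩) (rfl | ⟨rfl, hyz, hzj⟩)
    exacts [Or.inl rfl, Or.inr ⟨rfl, hyz, hzj⟩, Or.inr ⟨rfl, hxy, hyj⟩,
      Or.inr ⟨rfl, hyz, hzj⟩]
  le_of_rel := by
    rintro x y (rfl | ⟨rfl, hxy, -⟩)
    exacts [le_rfl, hxy]
  restrict := by
    rintro x y z (rfl | ⟨rfl, -, hyj⟩) hzy
    · exact Or.inl (inf_eq_right.2 hzy)
    · rcases le_total z x with hzx | hxz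
      · exact Or.inl (inf_eq_right.2 hzx)
      · exact Or.inr ⟨inf_eq_left.2 hxz, hxz, hzy.trans hyj⟩

theorem single_rel_self (h : i ≤ j) : (single i j).rel i j := Or.inr ⟨rfl, h, le_rfl⟩

theorem single_le_iff (h : i ≤ j) : single i j ≤ S ↔ S.rel i j := by
  refine ⟨fun hS => hS (single_rel_self h), fun hij x y => ?_⟩
  rintro (rfl | ⟨rfl, hxy, hyj⟩)
  exacts [S.refl x, rel_of_rel_of_le hij hxy hyj]

theorem single_mono (h : j ≤ k) : single i j ≤ single i k := by
  rintro x y (rfl | ⟨rfl, hxy, hyj⟩)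
  exacts [Or.inl rfl, Or.inr ⟨rfl, hxy, hyj.trans h⟩]

theorem single_injective {i' j' : L} (hij : i < j) (hij' : i' < j')
    (h : single i j = single i' j') : i = i' ∧ j = j' := by
  obtain hne | ⟨rfl, -, hjj'⟩ : i = j ∨ _ := h ▸ single_rel_self hij.le
  · exact absurd hne hij.ne
  obtain hne | ⟨-, -, hj'j⟩ : i = j' ∨ _ := h.symm ▸ single_rel_self hij'.le
  · exact absurd hne hij'.ne
  exact ⟨rfl, le_antisymm hjj' hj'j⟩

/-- Every transfer system below `single i j` is of the form `single i k`. -/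
theorem isChain_Iic_single : IsChain (· ≤ ·) (Set.Iic (single i j)) := by
  intro T hT U hU _
  by_cases hTU : T ≤ U
  · exact Or.inl hTU
  right
  obtain ⟨x, y, hTxy, hUxy⟩ := exists_rel_not_rel_of_not_le hTU
  obtain rfl | ⟨rfl, -, -⟩ := hT hTxy
  · exact absurd (U.refl x) hUxy
  intro x z hUxz
  obtain rfl | ⟨rfl, hxz, -⟩ := hU hUxz
  · exact T.refl x
  rcases le_total z y with hzy | hyz
  · exact rel_of_rel_of_le hTxy hxz hzy
  · exact absurd (rel_of_rel_of_le hUxz (T.le_of_rel hTxy) hyz) hUxy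

theorem supIrred_single (h : i < j) : SupIrred (single i j) := by
  refine supIrred_of_isChain_Iic (fun hmin => ?_) isChain_Iic_single
  obtain hij | ⟨-, -, hji⟩ := hmin (single_mono (i := i) h.le) (single_rel_self h.le)
  exacts [h.ne hij, h.not_ge hji]

def preservingIcc (a b : L) : TransferSystem L where
  rel x y := x ≤ y ∧ (a ≤ x → x ≤ b → y ≤ b)
  refl x := ⟨le_rfl, fun _ h => h⟩
  trans := by
    rintro x y z ⟨hxy, hx⟩ ⟨hyz, hy⟩
    exact ⟨hxy.trans hyz, fun hax hxb => hy (hax.trans hxy) (hx hax hxb)⟩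
  le_of_rel h := h.1
  restrict := by
    rintro x y z ⟨-, hx⟩ hzy
    refine ⟨inf_le_right, fun ha hb => ?_⟩
    rcases le_total x z with hxz | hzx
    · rw [inf_eq_left.2 hxz] at ha hb
      exact hzy.trans (hx ha hb)
    · rwa [inf_eq_right.2 hzx] at hb

theorem preservingIcc_rel :
    (preservingIcc a b).rel x y ↔ x ≤ y ∧ (a ≤ x → x ≤ b → y ≤ b) := Iff.rfl

theorem single_le_preservingIcc_iff {a' b' : L} (hij : i ≤ j) :
    single i j ≤ preservingIcc a' b' ↔ (a' ≤ i → i ≤ b' → j ≤ b') := by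
  rw [single_le_iff hij, preservingIcc_rel]
  exact and_iff_right hij

theorem iSup_single_eq (S : TransferSystem L) :
    ⨆ p : {p : L × L // p.1 < p.2 ∧ S.rel p.1 p.2}, single p.1.1 p.1.2 = S := by
  refine le_antisymm (iSup_le fun p => (single_le_iff p.2.1.le).2 p.2.2) fun x y hxy => ?_
  rcases (S.le_of_rel hxy).eq_or_lt with rfl | hlt
  · exact TransferSystem.refl _ x
  · exact le_iSup (fun p : {p : L × L // p.1 < p.2 ∧ S.rel p.1 p.2} => single p.1.1 p.1.2)
      ⟨(x, y), hlt, hxy⟩ (single_rel_self hlt.le)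

theorem exists_eq_single_of_supIrred [Finite L] (hS : SupIrred S) :
    ∃ i j, i < j ∧ S = single i j := by
  have := Fintype.ofFinite L
  classical
  obtain ⟨⟨⟨i, j⟩, hij, _⟩, -, h⟩ :=
    hS.finset_sup_eq (s := .univ) (f := fun p : {p : L × L // p.1 < p.2 ∧ S.rel p.1 p.2} =>
      single p.1.1 p.1.2) (by rw [Finset.sup_univ_eq_iSup, iSup_single_eq])
  exact ⟨i, j, hij, h.symm⟩

theorem exists_greatest_rel [Finite L] (S : TransferSystem L) (x : L) :
    ∃ m, S.rel x m ∧ ∀ y, S.rel x y → y ≤ m :=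
  Set.exists_max_image {y | S.rel x y} id (Set.toFinite _) ⟨x, S.refl x⟩

section OrderTop

variable [OrderTop L]

theorem preservingIcc_rel_top_iff (hb : b < ⊤) :
    (preservingIcc a b).rel x ⊤ ↔ x ∉ Set.Icc a b := by
  simp [preservingIcc_rel, hb.not_ge]

theorem preservingIcc_injective {a' b' : L} (hab : a ≤ b) (hb : b < ⊤) (hb' : b' < ⊤)
    (h : preservingIcc a b = preservingIcc a' b') : a = a' ∧ b = b' := by
  refine (Set.Icc_eq_Icc_iff hab).1 (Set.ext fun x => ?_)
  rw [← not_iff_not, ← preservingIcc_rel_top_iff hb, ← preservingIcc_rel_top_iff hb', h]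

theorem rel_top_of_preservingIcc_le (hT : preservingIcc a b ≤ T) (hxy : T.rel x y)
    (hy : ¬y ≤ b) : T.rel x ⊤ :=
  T.trans hxy (hT ⟨le_top, fun _ h => absurd h hy⟩)

theorem rel_top_of_le_of_preservingIcc_le (hT : preservingIcc a b ≤ T) (hx : T.rel x ⊤)
    (hkx : k ≤ x) (hxb : x ≤ b) : T.rel k ⊤ :=
  T.trans (hT ⟨hkx, fun _ _ => hxb⟩) hx

/-- Above `preservingIcc a b` a transfer system is determined by the initial segment of
`[a, b]` that it sends to `⊤`. -/
theorem isChain_Ici_preservingIcc : IsChain (· ≤ ·) (Set.Ici (preservingIcc a b)) := by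
  intro T hT U hU _
  by_cases hTU : T ≤ U
  · exact Or.inl hTU
  right
  obtain ⟨x, y, hTxy, hUxy⟩ := exists_rel_not_rel_of_not_le hTU
  obtain ⟨-, hxb, hyb⟩ : a ≤ x ∧ x ≤ b ∧ ¬y ≤ b := by
    by_contra! h
    exact hUxy (hU ⟨T.le_of_rel hTxy, h⟩)
  have hUx : ¬U.rel x ⊤ := fun h => hUxy (rel_of_rel_of_le h (T.le_of_rel hTxy) le_top)
  intro u v hUuv
  by_cases hP : (preservingIcc a b).rel u v
  · exact hT hP
  obtain ⟨-, hub, hvb⟩ : a ≤ u ∧ u ≤ b ∧ ¬v ≤ b := by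
    by_contra! h
    exact hP ⟨U.le_of_rel hUuv, h⟩
  have hUu := rel_top_of_preservingIcc_le hU hUuv hvb
  have hux : u < x := lt_of_not_ge fun hxu =>
    hUx (rel_top_of_le_of_preservingIcc_le hU hUu hxu hub)
  exact rel_of_rel_of_le (rel_top_of_le_of_preservingIcc_le hT
    (rel_top_of_preservingIcc_le hT hTxy hyb) hux.le hxb) (U.le_of_rel hUuv) le_top

theorem infIrred_preservingIcc (hab : a ≤ b) (hb : b < ⊤) : InfIrred (preservingIcc a b) := by
  refine infIrred_of_isChain_Ici (fun hmax => ?_) isChain_Ici_preservingIcc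
  have hrel : (preservingIcc a b).rel a ⊤ := hmax le_top ⟨le_top, fun _ h => h.elim⟩
  exact hb.not_ge (hrel.2 le_rfl hab)

theorem iInf_preservingIcc_eq [Finite L] (S : TransferSystem L) :
    ⨅ p : {p : L × L // p.1 ≤ p.2 ∧ p.2 < ⊤ ∧ S ≤ preservingIcc p.1 p.2},
      preservingIcc p.1.1 p.1.2 = S := by
  refine le_antisymm (fun x y hxy => ?_) (le_iInf fun p => p.2.2.2)
  obtain ⟨hle, hall⟩ := (sInf_rel _ x y).1 hxy
  by_contra hS
  obtain ⟨m, hxm, hm⟩ := exists_greatest_rel S x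
  have hmy : ¬y ≤ m := fun h => hS (rel_of_rel_of_le hxm hle h)
  have hSm : S ≤ preservingIcc x m := fun u v huv =>
    ⟨S.le_of_rel huv, fun hxu hum => hm v (S.trans (rel_of_rel_of_le hxm hxu hum) huv)⟩
  have hm_top : m < ⊤ := lt_of_lt_of_le (lt_of_not_ge hmy) le_top
  have hPxm := hall _ ⟨⟨(x, m), S.le_of_rel hxm, hm_top, hSm⟩, rfl⟩
  exact hmy (hPxm.2 le_rfl (S.le_of_rel hxm))

theorem exists_eq_preservingIcc_of_infIrred [Finite L] (hS : InfIrred S) :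
    ∃ a b, a ≤ b ∧ b < ⊤ ∧ S = preservingIcc a b := by
  have := Fintype.ofFinite L
  classical
  obtain ⟨⟨⟨a, b⟩, hab, hb, _⟩, -, h⟩ :=
    hS.finset_inf_eq (s := .univ)
      (f := fun p : {p : L × L // p.1 ≤ p.2 ∧ p.2 < ⊤ ∧ S ≤ preservingIcc p.1 p.2} =>
        preservingIcc p.1.1 p.1.2) (by rw [Finset.inf_univ_eq_iInf, iInf_preservingIcc_eq])
  exact ⟨a, b, hab, hb, h.symm⟩

end OrderTop

end LinearOrder

end TransferSystem

theorem Nat.sum_range_add_choose_of_le {s k : ℕ} (h : s ≤ k) (m : ℕ) :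
    ∑ i ∈ Finset.range m, (i + s).choose k = (m + s).choose (k + 1) := by
  induction m with
  | zero => simp [Nat.choose_eq_zero_of_lt (Nat.lt_succ_of_le h)]
  | succ m ih => rw [Finset.sum_range_succ, ih, add_right_comm, Nat.choose_succ_succ', add_comm]

theorem card_sigma_fin_val (n : ℕ) :
    Fintype.card (Σ j : Fin (n + 1), Fin j) = (n + 1).choose 2 := by
  simpa [Fin.sum_univ_eq_sum_range (fun j => j)] using
    Nat.sum_range_add_choose_of_le (s := 0) (k := 1) zero_le_one (n + 1)

theorem card_sigma_fin_succ (n : ℕ) :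
    Fintype.card (Σ b : Fin n, Fin (b + 1)) = (n + 1).choose 2 := by
  simpa [Fin.sum_univ_eq_sum_range (fun b => b + 1)] using
    Nat.sum_range_add_choose_of_le (s := 1) (k := 1) le_rfl n

/-- The tuples `a ≤ i ≤ b < j ≤ n`. -/
theorem card_sigma_fin_four (n : ℕ) :
    Fintype.card (Σ j : Fin (n + 1), Σ b : Fin j, Σ i : Fin (b + 1), Fin (i + 1)) =
      (n + 3).choose 4 := by
  have h2 (b : ℕ) : ∑ i : Fin (b + 1), (i + 1 : ℕ) = (b + 2).choose 2 := by
    simpa [Fin.sum_univ_eq_sum_range (fun i => i + 1)] using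
      Nat.sum_range_add_choose_of_le (s := 1) (k := 1) le_rfl (b + 1)
  have h3 (j : ℕ) : ∑ b : Fin j, (b + 2 : ℕ).choose 2 = (j + 2).choose 3 := by
    rw [Fin.sum_univ_eq_sum_range (fun b => (b + 2).choose 2)]
    exact Nat.sum_range_add_choose_of_le le_rfl j
  simp only [Fintype.card_sigma, Fintype.card_fin, h2, h3]
  rw [Fin.sum_univ_eq_sum_range (fun j => (j + 2).choose 3)]
  exact Nat.sum_range_add_choose_of_le (by norm_num) (n + 1)

namespace TransferSystem

theorem card_supIrred_fin (n : ℕ) :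
    Nat.card {S : TransferSystem (Fin (n + 1)) // SupIrred S} = (n + 1).choose 2 := by
  rw [← card_sigma_fin_val, ← Nat.card_eq_fintype_card]
  refine (Nat.card_eq_of_bijective (fun (⟨j, i⟩ : Σ j : Fin (n + 1), Fin j) =>
    ⟨single ⟨i, by omega⟩ j, supIrred_single i.2⟩) ⟨?_, ?_⟩).symm
  · rintro ⟨j, i⟩ ⟨j', i'⟩ h
    simp only [Subtype.mk.injEq] at h
    obtain ⟨hi, rfl⟩ := single_injective (by exact i.2) (by exact i'.2) h
    obtain rfl : i = i' := Fin.ext (Fin.mk.inj hi)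
    rfl
  · rintro ⟨S, hS⟩
    obtain ⟨i, j, hij, rfl⟩ := exists_eq_single_of_supIrred hS
    exact ⟨⟨j, i, hij⟩, rfl⟩

theorem card_infIrred_fin (n : ℕ) :
    Nat.card {S : TransferSystem (Fin (n + 1)) // InfIrred S} = (n + 1).choose 2 := by
  rw [← card_sigma_fin_succ, ← Nat.card_eq_fintype_card]
  refine (Nat.card_eq_of_bijective (fun (⟨b, a⟩ : Σ b : Fin n, Fin (b + 1)) =>
    ⟨preservingIcc ⟨a, by omega⟩ ⟨b, by omega⟩,
      infIrred_preservingIcc (Nat.le_of_lt_succ a.2) b.2⟩) ⟨?_, ?_⟩).symm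
  · rintro ⟨b, a⟩ ⟨b', a'⟩ h
    simp only [Subtype.mk.injEq] at h
    obtain ⟨ha, hb⟩ := preservingIcc_injective (by exact Nat.le_of_lt_succ a.2) (by exact b.2)
      (by exact b'.2) h
    obtain rfl : b = b' := Fin.ext (Fin.mk.inj hb)
    obtain rfl : a = a' := Fin.ext (Fin.mk.inj ha)
    rfl
  · rintro ⟨S, hS⟩
    obtain ⟨a, b, hab, hb, rfl⟩ := exists_eq_preservingIcc_of_infIrred hS
    exact ⟨⟨⟨b, hb⟩, a, Nat.lt_succ_of_le hab⟩, rfl⟩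

theorem card_not_le_fin (n : ℕ) :
    Nat.card {p : TransferSystem (Fin (n + 1)) × TransferSystem (Fin (n + 1)) //
      SupIrred p.1 ∧ InfIrred p.2 ∧ ¬p.1 ≤ p.2} = (n + 3).choose 4 := by
  rw [← card_sigma_fin_four, ← Nat.card_eq_fintype_card]
  refine (Nat.card_eq_of_bijective
    (fun (⟨j, b, i, a⟩ : Σ j : Fin (n + 1), Σ b : Fin j, Σ i : Fin (b + 1), Fin (i + 1)) =>
      ⟨(single ⟨i, by omega⟩ j, preservingIcc ⟨a, by omega⟩ ⟨b, by omega⟩),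
        supIrred_single (show (i : ℕ) < j by omega),
        infIrred_preservingIcc (show (a : ℕ) ≤ b by omega) (show (b : ℕ) < n by omega),
        fun h => ((single_le_preservingIcc_iff (by change (i : ℕ) ≤ j; omega)).1 h
          (Nat.le_of_lt_succ a.2) (Nat.le_of_lt_succ i.2)).not_gt b.2⟩)
    ⟨?_, ?_⟩).symm
  · rintro ⟨j, b, i, a⟩ ⟨j', b', i', a'⟩ h
    simp only [Subtype.mk.injEq, Prod.mk.injEq] at h
    obtain ⟨hi, rfl⟩ := single_injective (by change (i : ℕ) < j; omega)
      (by change (i' : ℕ) < j'; omega) h.1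
    obtain ⟨ha, hb⟩ := preservingIcc_injective (by change (a : ℕ) ≤ b; omega)
      (by change (b : ℕ) < n; omega) (by change (b' : ℕ) < n; omega) h.2
    obtain rfl : b = b' := Fin.ext (Fin.mk.inj hb)
    obtain rfl : i = i' := Fin.ext (Fin.mk.inj hi)
    obtain rfl : a = a' := Fin.ext (Fin.mk.inj ha)
    rfl
  · rintro ⟨⟨A, B⟩, hA, hB, hAB⟩
    obtain ⟨i, j, hij, rfl⟩ := exists_eq_single_of_supIrred hA
    obtain ⟨a, b, -, -, rfl⟩ := exists_eq_preservingIcc_of_infIrred hB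
    rw [single_le_preservingIcc_iff hij.le] at hAB
    push Not at hAB
    obtain ⟨hai, hib, hbj⟩ := hAB
    exact ⟨⟨j, ⟨b, hbj⟩, ⟨i, Nat.lt_succ_of_le hib⟩, a, Nat.lt_succ_of_le hai⟩, rfl⟩

end TransferSystem

theorem codensity_transferSystem_fin {n : ℕ} (hn : 1 ≤ n) :
    codensity (TransferSystem (Fin (n + 1))) =
      ((n : ℚ) + 2) * ((n : ℚ) + 3) / (6 * n * ((n : ℚ) + 1)) := by
  have h4 : 24 * (n + 3).choose 4 = (n + 3) * (n + 2) * (n + 1) * n := by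
    rw [show 24 = Nat.factorial 4 from rfl, ← Nat.descFactorial_eq_factorial_mul_choose]
    simp [Nat.descFactorial_succ]
    ring
  have h4' : ((n + 3).choose 4 : ℚ) = (n + 3) * (n + 2) * (n + 1) * n / 24 := by
    rw [eq_div_iff (by norm_num), mul_comm]
    exact_mod_cast h4
  have hn' : (n : ℚ) ≠ 0 := Nat.cast_ne_zero.2 (by omega)
  rw [codensity, TransferSystem.card_not_le_fin, TransferSystem.card_supIrred_fin,
    TransferSystem.card_infIrred_fin, h4', Nat.cast_choose_two]
  push_cast
  rw [add_sub_cancel_right]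
  field_simp
  ring

open Filter Topology in
theorem tendsto_codensity_formula :
    Tendsto (fun n : ℕ => ((n : ℚ) + 2) * ((n : ℚ) + 3) / (6 * n * ((n : ℚ) + 1))) atTop
      (𝓝 (1 / 6)) := by
  have h0 : Tendsto (fun n : ℕ => (n : ℚ)⁻¹) atTop (𝓝 0) :=
    tendsto_inv_atTop_zero.comp tendsto_natCast_atTop_atTop
  have hlim := (((h0.const_mul 2).const_add 1).mul ((h0.const_mul 3).const_add 1)).div
    ((h0.const_add 1).const_mul 6) (by norm_num)
  norm_num at hlim
  refine hlim.congr' ((eventually_ne_atTop 0).mono fun n hn => ?_)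
  have hn' : (n : ℚ) ≠ 0 := Nat.cast_ne_zero.2 hn
  rw [Pi.div_apply]
  field_simp

/-- For `n ≥ 1`, `ρ(Tr([n])) = (n+2)(n+3)/(6n(n+1))`; consequently
`ρ(Tr([n])) → 1/6` as `n → ∞`. -/
theorem codensity_chain :
    (∀ n : ℕ, 1 ≤ n →
      codensity (TransferSystem (Fin (n + 1))) =
        ((n : ℚ) + 2) * ((n : ℚ) + 3) / (6 * n * ((n : ℚ) + 1))) ∧
    Filter.Tendsto (fun n : ℕ => codensity (TransferSystem (Fin (n + 1))))
      Filter.atTop (nhds (1 / 6 : ℚ)) :=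
  ⟨fun _ hn => codensity_transferSystem_fin hn,
    tendsto_codensity_formula.congr' (Filter.eventually_atTop.2
      ⟨1, fun _ hn => (codensity_transferSystem_fin hn).symm⟩)⟩
end

section
/- Let k ≥ 1 and let n₁, …, n_k be positive integers. Then the codensity of the lattice of transfer systems on the product of chains [n₁] × ⋯ × [n_k] satisfies ρ(Tr([n₁] × ⋯ × [n_k])) = N/D², where N = Σ over all tuples with 0 ≤ x_i ≤ y_i ≤ z_i ≤ n_i for each 1 ≤ i ≤ k of (∏_{i=1}^k (z_i − x_i + 1) − ∏_{i=1}^k (z_i − y_i + 1)), and D = Σ over all tuples with 0 ≤ x_i ≤ n_i for each 1 ≤ i ≤ k of (∏_{i=1}^k (n_i − x_i + 1) − 1). -/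
/-!
The join-irreducible transfer systems on a finite lattice are exactly those generated by one
arrow `p → q` with `p < q`, and the meet-irreducible ones are exactly the systems
`avoiding x y` with `x < y`, which forbid `w → z` exactly when `x ≤ w`, `y ≤ z` and `y ≰ w`.
Both families are indexed bijectively by the strict pairs of the lattice, and
`ofArrow p q ≰ avoiding x y` iff `x ≤ p`, `y ≤ q` and `y ≰ p`. Counting, for `x ≤ y ≤ z`, the
elements `w ∈ [x, z]` with `y ≰ w` as `|[x, z]| - |[y, z]|`, and using that an interval in a
product of chains has size `∏ (zᵢ - xᵢ + 1)`, turns these counts into `N` and `D`.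
-/

open Finset Function

theorem supIrred_of_forall_lt_le {α : Type*} [SemilatticeSup α] {a c : α} (hca : c < a)
    (h : ∀ b < a, b ≤ c) : SupIrred a := by
  refine ⟨fun ha => ha.not_lt hca, fun b d hbd => ?_⟩
  by_contra! hne
  have hb : b < a := lt_of_le_of_ne (hbd ▸ le_sup_left) hne.1
  have hd : d < a := lt_of_le_of_ne (hbd ▸ le_sup_right) hne.2
  exact hca.not_ge (hbd ▸ sup_le (h b hb) (h d hd))

theorem infIrred_of_forall_lt_ge {α : Type*} [SemilatticeInf α] {a c : α} (hac : a < c)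
    (h : ∀ b, a < b → c ≤ b) : InfIrred a :=
  supIrred_toDual.1 <| supIrred_of_forall_lt_le (α := αᵒᵈ) hac fun b hb => h b hb

namespace TransferSystem

variable {L : Type*} [Lattice L] {T : TransferSystem L} {p q x y : L}

/-- The transfer system generated by the single arrow `p → q`. -/
def ofArrow (p q : L) : TransferSystem L where
  rel a b := a = b ∨ (b ≤ q ∧ a = p ⊓ b)
  refl _ := Or.inl rfl
  trans := by
    rintro a b c (rfl | ⟨hb, rfl⟩) (rfl | ⟨hc, rfl⟩)
    · exact Or.inl rfl
    · exact Or.inr ⟨hc, rfl⟩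
    · exact Or.inr ⟨hb, rfl⟩
    · exact Or.inr ⟨hc, by rw [← inf_assoc, inf_idem]⟩
  le_of_rel := by rintro a b (rfl | ⟨hb, rfl⟩); exacts [le_rfl, inf_le_right]
  restrict := by
    rintro a b c (rfl | ⟨hb, rfl⟩) hcb
    · exact Or.inl (inf_eq_right.2 hcb)
    · exact Or.inr ⟨hcb.trans hb, by rw [inf_assoc, inf_eq_right.2 hcb]⟩

theorem ofArrow_rel_self (h : p ≤ q) : (ofArrow p q).rel p q :=
  Or.inr ⟨le_rfl, (inf_eq_left.2 h).symm⟩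

theorem ofArrow_le_iff (h : p ≤ q) : ofArrow p q ≤ T ↔ T.rel p q := by
  refine ⟨fun hT => hT (ofArrow_rel_self h), fun hpq a b => ?_⟩
  rintro (rfl | ⟨hb, rfl⟩)
  exacts [T.refl a, T.restrict hpq hb]

/-- A maximal transfer system without the arrow `x → y`. -/
def avoiding (x y : L) : TransferSystem L where
  rel w z := w ≤ z ∧ (x ≤ w → y ≤ z → y ≤ w)
  refl _ := ⟨le_rfl, fun _ h => h⟩
  trans := by
    rintro a b c ⟨hab, h1⟩ ⟨hbc, h2⟩
    exact ⟨hab.trans hbc, fun hxa hyc => h1 hxa (h2 (hxa.trans hab) hyc)⟩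
  le_of_rel h := h.1
  restrict := by
    rintro a b c ⟨_, h⟩ hcb
    exact ⟨inf_le_right, fun hx hy => le_inf (h (hx.trans inf_le_left) (hy.trans hcb)) hy⟩

theorem avoiding_rel {w z : L} :
    (avoiding x y).rel w z ↔ w ≤ z ∧ (x ≤ w → y ≤ z → y ≤ w) := Iff.rfl

theorem not_avoiding_rel_self (h : ¬ y ≤ x) : ¬ (avoiding x y).rel x y :=
  fun hr => h (hr.2 le_rfl le_rfl)

theorem ofArrow_le_avoiding_iff {w z : L} (h : w ≤ z) :
    ofArrow w z ≤ avoiding x y ↔ (x ≤ w → y ≤ z → y ≤ w) := by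
  rw [ofArrow_le_iff h, avoiding_rel, and_iff_right h]

/-- `V` has an arrow `w → z` with `x ≤ w`, `y ≤ z`, `y ≰ w`; restricted to `y` and preceded by
`x → w ⊓ y`, which `avoiding x y` allows, it gives `x → y`. -/
theorem rel_of_avoiding_lt (hxy : x ≤ y) {V : TransferSystem L} (hV : avoiding x y < V) :
    V.rel x y := by
  obtain ⟨w, z, hwz, hnot⟩ : ∃ w z, V.rel w z ∧ ¬ (avoiding x y).rel w z := by
    by_contra! h
    exact hV.not_ge fun w z => h w z
  obtain ⟨hxw, hyz, hyw⟩ : x ≤ w ∧ y ≤ z ∧ ¬ y ≤ w := by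
    by_contra! h
    exact hnot ⟨V.le_of_rel hwz, h⟩
  have hx : V.rel x (w ⊓ y) :=
    hV.le ⟨le_inf hxw hxy, fun _ h => absurd (h.trans inf_le_left) hyw⟩
  exact V.trans hx (V.restrict hwz hyz)

theorem le_avoiding_of_le_ofArrow (hT : T ≤ ofArrow p q) (hpq : ¬ T.rel p q) :
    T ≤ avoiding p q := by
  intro a b hab
  refine ⟨T.le_of_rel hab, fun hpa hqb => ?_⟩
  rcases hT hab with rfl | ⟨hbq, rfl⟩
  · exact hqb
  · obtain rfl := le_antisymm hbq hqb
    rw [le_antisymm inf_le_left hpa] at hab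
    exact absurd hab hpq

/-- `ofArrow p q ⊓ avoiding p q` is `ofArrow p q` with the single arrow `p → q` removed. -/
theorem supIrred_ofArrow (h : p < q) : SupIrred (ofArrow p q) := by
  refine supIrred_of_forall_lt_le (c := ofArrow p q ⊓ avoiding p q)
    (inf_le_left.lt_of_not_ge fun hle => ?_) fun T hT => le_inf hT.le ?_
  · exact not_avoiding_rel_self h.not_ge ((hle.trans inf_le_right) (ofArrow_rel_self h.le))
  · exact le_avoiding_of_le_ofArrow hT.le fun hr => hT.not_ge ((ofArrow_le_iff h.le).2 hr)

theorem infIrred_avoiding (h : x < y) : InfIrred (avoiding x y) := by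
  refine infIrred_of_forall_lt_ge (c := avoiding x y ⊔ ofArrow x y)
    (left_lt_sup.2 fun hle => ?_) fun V hV => sup_le hV.le ?_
  · exact not_avoiding_rel_self h.not_ge (hle (ofArrow_rel_self h.le))
  · exact (ofArrow_le_iff h.le).2 (rel_of_avoiding_lt h.le hV)

theorem ofArrow_injOn : Set.InjOn (uncurry (ofArrow (L := L))) {e | e.1 < e.2} := by
  rintro ⟨p, q⟩ (hpq : p < q) ⟨p', q'⟩ (hpq' : p' < q') he
  simp only [uncurry_apply_pair] at he
  have h₁ : (ofArrow p' q').rel p q := he ▸ ofArrow_rel_self hpq.le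
  have h₂ : (ofArrow p q).rel p' q' := he ▸ ofArrow_rel_self hpq'.le
  rcases h₁ with h₁ | ⟨hqq', rfl⟩
  · exact absurd h₁ hpq.ne
  rcases h₂ with h₂ | ⟨hq'q, -⟩
  · exact absurd h₂ hpq'.ne
  obtain rfl := le_antisymm hqq' hq'q
  rw [inf_eq_left.2 hpq'.le]

theorem avoiding_injOn : Set.InjOn (uncurry (avoiding (L := L))) {e | e.1 < e.2} := by
  rintro ⟨x, y⟩ (hxy : x < y) ⟨x', y'⟩ (hxy' : x' < y') he
  simp only [uncurry_apply_pair] at he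
  have h₁ := he ▸ not_avoiding_rel_self hxy.not_ge
  have h₂ := he ▸ not_avoiding_rel_self hxy'.not_ge
  simp only [avoiding_rel, hxy.le, hxy'.le, true_and] at h₁ h₂
  push Not at h₁ h₂
  rw [Prod.mk.injEq]
  exact ⟨le_antisymm h₂.1 h₁.1, le_antisymm h₂.2.1 h₁.2.1⟩

/-- The witness is `u ⊓ y → y` for `y ≤ v` minimal with `¬ B.rel (u ⊓ y) y`. -/
theorem exists_le_avoiding_not_rel [Finite L] (B : TransferSystem L) {u v : L} (huv : u ≤ v)
    (h : ¬ B.rel u v) : ∃ x y, x < y ∧ B ≤ avoiding x y ∧ ¬ (avoiding x y).rel u v := by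
  obtain ⟨y, hy⟩ := (Set.toFinite {y | y ≤ v ∧ ¬ B.rel (u ⊓ y) y}).exists_minimal
    ⟨v, le_rfl, by rwa [inf_eq_left.2 huv]⟩
  obtain ⟨hyv, hBy⟩ := hy.prop
  have hyu : ¬ y ≤ u := fun hyu => hBy (by rw [inf_eq_right.2 hyu]; exact B.refl y)
  refine ⟨u ⊓ y, y, inf_le_right.lt_of_not_ge fun h => hyu (h.trans inf_le_left), ?_,
    fun hr => hyu (hr.2 inf_le_left hyv)⟩
  intro w z hwz
  refine ⟨B.le_of_rel hwz, fun hw hyz => ?_⟩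
  have hu : u ⊓ (w ⊓ y) = u ⊓ y :=
    le_antisymm (inf_le_inf_left u inf_le_right) (le_inf inf_le_left (le_inf hw inf_le_right))
  have hmem : w ⊓ y ≤ v ∧ ¬ B.rel (u ⊓ (w ⊓ y)) (w ⊓ y) :=
    ⟨inf_le_right.trans hyv, fun hr => hBy (B.trans (hu ▸ hr) (B.restrict hwz hyz))⟩
  exact (hy.le_of_le hmem inf_le_right).trans inf_le_left

theorem exists_eq_ofArrow_of_supIrred [Finite L] (hT : SupIrred T) :
    ∃ e : L × L, e.1 < e.2 ∧ uncurry ofArrow e = T := by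
  classical
  have : Fintype L := Fintype.ofFinite L
  let s := ({e | e.1 < e.2 ∧ T.rel e.1 e.2} : Finset (L × L))
  have hsup : s.sup (uncurry ofArrow) = T := by
    refine le_antisymm (Finset.sup_le fun e he => ?_) fun a b hab => ?_
    · exact (ofArrow_le_iff (mem_filter.1 he).2.1.le).2 (mem_filter.1 he).2.2
    obtain rfl | hab' := (T.le_of_rel hab).eq_or_lt
    · exact TransferSystem.refl _ a
    · exact le_sup (f := uncurry ofArrow) (mem_filter.2 ⟨mem_univ (a, b), hab', hab⟩)
        (ofArrow_rel_self hab'.le)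
  obtain ⟨e, he, rfl⟩ := hT.finset_sup_eq hsup
  exact ⟨e, (mem_filter.1 he).2.1, rfl⟩

theorem exists_eq_avoiding_of_infIrred [Finite L] (hT : InfIrred T) :
    ∃ e : L × L, e.1 < e.2 ∧ uncurry avoiding e = T := by
  classical
  have : Fintype L := Fintype.ofFinite L
  let s := ({e | e.1 < e.2 ∧ T ≤ avoiding e.1 e.2} : Finset (L × L))
  have hinf : s.inf (uncurry avoiding) = T := by
    refine le_antisymm (fun w z hwz => ?_) (Finset.le_inf fun e he => (mem_filter.1 he).2.2)
    by_contra hT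
    obtain ⟨x, y, hxy, hle, hnot⟩ :=
      exists_le_avoiding_not_rel T ((s.inf (uncurry avoiding)).le_of_rel hwz) hT
    exact hnot (inf_le (f := uncurry avoiding) (mem_filter.2 ⟨mem_univ (x, y), hxy, hle⟩) hwz)
  obtain ⟨e, he, rfl⟩ := hT.finset_inf_eq hinf
  exact ⟨e, (mem_filter.1 he).2.1, rfl⟩

theorem bijOn_ofArrow [Finite L] :
    Set.BijOn (uncurry ofArrow) {e : L × L | e.1 < e.2} {T | SupIrred T} :=
  ⟨fun _ he => supIrred_ofArrow he, ofArrow_injOn, fun _ hT => exists_eq_ofArrow_of_supIrred hT⟩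

theorem bijOn_avoiding [Finite L] :
    Set.BijOn (uncurry avoiding) {e : L × L | e.1 < e.2} {T | InfIrred T} :=
  ⟨fun _ he => infIrred_avoiding he, avoiding_injOn,
    fun _ hT => exists_eq_avoiding_of_infIrred hT⟩

theorem bijOn_ofArrow_avoiding [Finite L] :
    Set.BijOn (fun t : L × L × L × L => (ofArrow t.2.2.2 t.2.2.1, avoiding t.1 t.2.1))
      {(x, y, z, w) : L × L × L × L | x < y ∧ w < z ∧ x ≤ w ∧ y ≤ z ∧ ¬ y ≤ w}
      {P | SupIrred P.1 ∧ InfIrred P.2 ∧ ¬ P.1 ≤ P.2} := by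
  refine ⟨?_, ?_, ?_⟩
  · rintro ⟨x, y, z, w⟩ ⟨hxy, hwz, hxw, hyz, hyw⟩
    exact ⟨supIrred_ofArrow hwz, infIrred_avoiding hxy,
      fun h => hyw ((ofArrow_le_avoiding_iff hwz.le).1 h hxw hyz)⟩
  · rintro ⟨x, y, z, w⟩ ⟨hxy, hwz, -⟩ ⟨x', y', z', w'⟩ ⟨hxy', hwz', -⟩ he
    simp only [Prod.mk.injEq] at he ⊢
    have h₁ := ofArrow_injOn (x₁ := (w, z)) hwz (x₂ := (w', z')) hwz' he.1
    have h₂ := avoiding_injOn (x₁ := (x, y)) hxy (x₂ := (x', y')) hxy' he.2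
    simp only [Prod.mk.injEq] at h₁ h₂
    exact ⟨h₂.1, h₂.2, h₁.2, h₁.1⟩
  · rintro ⟨A, B⟩ ⟨hA, hB, hAB⟩
    obtain ⟨⟨w, z⟩, hwz, rfl⟩ := bijOn_ofArrow.surjOn hA
    obtain ⟨⟨x, y⟩, hxy, rfl⟩ := bijOn_avoiding.surjOn hB
    simp only [uncurry_apply_pair, ofArrow_le_avoiding_iff hwz.le] at hAB
    push Not at hAB
    exact ⟨(x, y, z, w), ⟨hxy, hwz, hAB.1, hAB.2.1, hAB.2.2⟩, rfl⟩

theorem codensity_eq_ncard [Finite L] :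
    codensity (TransferSystem L) =
      ({(x, y, z, w) : L × L × L × L | x < y ∧ w < z ∧ x ≤ w ∧ y ≤ z ∧ ¬ y ≤ w}.ncard : ℚ) /
        ({e : L × L | e.1 < e.2}.ncard : ℚ) ^ 2 := by
  have hN : Nat.card {P : TransferSystem L × TransferSystem L //
      SupIrred P.1 ∧ InfIrred P.2 ∧ ¬ P.1 ≤ P.2} =
      {(x, y, z, w) : L × L × L × L | x < y ∧ w < z ∧ x ≤ w ∧ y ≤ z ∧ ¬ y ≤ w}.ncard :=
    (Nat.card_congr (bijOn_ofArrow_avoiding.equiv _)).symm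
  have hJ : Nat.card {T : TransferSystem L // SupIrred T} = {e : L × L | e.1 < e.2}.ncard :=
    (Nat.card_congr (bijOn_ofArrow.equiv _)).symm
  have hM : Nat.card {T : TransferSystem L // InfIrred T} = {e : L × L | e.1 < e.2}.ncard :=
    (Nat.card_congr (bijOn_avoiding.equiv _)).symm
  rw [codensity, hN, hJ, hM, sq]

end TransferSystem

section Counting

variable {L : Type*}

theorem ncard_setOf_lt_eq_sum_card_Ioi [Fintype L] [Preorder L] [LocallyFiniteOrderTop L] :
    {e : L × L | e.1 < e.2}.ncard = ∑ x : L, #(Ioi x) := by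
  classical
  rw [Set.ncard_eq_toFinset_card', Set.toFinset_ofPred, card_filter, Fintype.sum_prod_type]
  exact sum_congr rfl fun x _ => by rw [← filter_lt_eq_Ioi, card_filter]

theorem card_Icc_add_card_filter_not_le [PartialOrder L] [LocallyFiniteOrder L] [DecidableLE L]
    {x y z : L} (hxy : x ≤ y) : #(Icc y z) + #{w ∈ Icc x z | ¬ y ≤ w} = #(Icc x z) := by
  have : {w ∈ Icc x z | y ≤ w} = Icc y z := by
    ext w
    simp only [mem_filter, mem_Icc]
    exact ⟨fun h => ⟨h.2, h.1.2⟩, fun h => ⟨⟨hxy.trans h.1, h.2⟩, h.1⟩⟩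
  rw [← this, card_filter_add_card_filter_not]

theorem card_filter_quadruple [Fintype L] [PartialOrder L] [LocallyFiniteOrder L]
    [DecidableLE L] [DecidableLT L] (x y z : L) :
    #{w | x < y ∧ w < z ∧ x ≤ w ∧ y ≤ z ∧ ¬ y ≤ w} =
      if x ≤ y ∧ y ≤ z then #{w ∈ Icc x z | ¬ y ≤ w} else 0 := by
  split_ifs with h
  · congr 1
    ext w
    simp only [mem_filter, mem_univ, true_and, mem_Icc]
    constructor
    · rintro ⟨-, hwz, hxw, -, hyw⟩
      exact ⟨⟨hxw, hwz.le⟩, hyw⟩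
    · rintro ⟨⟨hxw, hwz⟩, hyw⟩
      exact ⟨h.1.lt_of_ne (by rintro rfl; exact hyw hxw),
        hwz.lt_of_ne (by rintro rfl; exact hyw h.2), hxw, h.2, hyw⟩
  · exact card_eq_zero.2 (filter_eq_empty_iff.2 fun w _ hw => h ⟨hw.1.le, hw.2.2.2.1⟩)

theorem ncard_quadruples_eq_sum [Fintype L] [PartialOrder L] [LocallyFiniteOrder L]
    [DecidableLE L] :
    ({(x, y, z, w) : L × L × L × L | x < y ∧ w < z ∧ x ≤ w ∧ y ≤ z ∧ ¬ y ≤ w}.ncard : ℚ) =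
      ∑ x : L, ∑ y : L, ∑ z : L,
        if x ≤ y ∧ y ≤ z then (#(Icc x z) - #(Icc y z) : ℚ) else 0 := by
  classical
  rw [Set.ncard_eq_toFinset_card', Set.toFinset_ofPred, card_filter]
  simp only [Fintype.sum_prod_type, Nat.cast_sum]
  refine sum_congr rfl fun x _ => sum_congr rfl fun y _ => sum_congr rfl fun z _ => ?_
  rw [← Nat.cast_sum, ← card_filter, card_filter_quadruple]
  split_ifs with h
  · rw [← card_Icc_add_card_filter_not_le h.1, Nat.cast_add, add_sub_cancel_left]
  · exact Nat.cast_zero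

end Counting

section ProductOfChains

variable {ι : Type*} [Fintype ι] [DecidableEq ι] {n : ι → ℕ}

theorem natCast_card_Icc_pi_fin {x z : ∀ i, Fin (n i + 1)} (h : x ≤ z) :
    (#(Icc x z) : ℚ) = ∏ i, (((z i : ℕ) : ℚ) - ((x i : ℕ) : ℚ) + 1) := by
  rw [Pi.card_Icc, Nat.cast_prod]
  refine prod_congr rfl fun i _ => ?_
  rw [Fin.card_Icc, Nat.cast_sub ((Fin.le_iff_val_le_val.1 (h i)).trans (Nat.le_succ _))]
  push_cast
  ring

theorem natCast_card_Ioi_pi_fin (x : ∀ i, Fin (n i + 1)) :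
    (#(Ioi x) : ℚ) = ∏ i, ((n i : ℚ) - ((x i : ℕ) : ℚ) + 1) - 1 := by
  have hIci : #(Ici x) = #(Ioi x) + 1 := by rw [Ici_eq_cons_Ioi, card_cons]
  rw [eq_sub_iff_add_eq, ← Nat.cast_add_one, ← hIci, Pi.card_Ici, Nat.cast_prod]
  refine prod_congr rfl fun i _ => ?_
  rw [Fin.card_Ici, Nat.cast_sub (x i).is_lt.le]
  push_cast
  ring

end ProductOfChains

theorem codensity_pi_chain_general (k : ℕ) (n : Fin k → ℕ) :
    codensity (TransferSystem (∀ i : Fin k, Fin (n i + 1))) =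
      (∑ x : ∀ i : Fin k, Fin (n i + 1), ∑ y : ∀ i : Fin k, Fin (n i + 1),
          ∑ z : ∀ i : Fin k, Fin (n i + 1),
            if ∀ i, x i ≤ y i ∧ y i ≤ z i then
              (∏ i, (((z i : ℕ) : ℚ) - ((x i : ℕ) : ℚ) + 1)) -
                ∏ i, (((z i : ℕ) : ℚ) - ((y i : ℕ) : ℚ) + 1)
            else 0) /
        (∑ x : ∀ i : Fin k, Fin (n i + 1),
          ((∏ i, ((n i : ℚ) - ((x i : ℕ) : ℚ) + 1)) - 1)) ^ 2 := by
  classical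
  rw [TransferSystem.codensity_eq_ncard, ncard_quadruples_eq_sum,
    ncard_setOf_lt_eq_sum_card_Ioi, Nat.cast_sum]
  congr 1
  · refine sum_congr rfl fun x _ => sum_congr rfl fun y _ => sum_congr rfl fun z _ => ?_
    simp only [forall_and, ← Pi.le_def]
    split_ifs with h
    · rw [natCast_card_Icc_pi_fin (h.1.trans h.2), natCast_card_Icc_pi_fin h.2]
    · rfl
  · simp only [natCast_card_Ioi_pi_fin]

/-- The codensity of `Tr([n₁] × ⋯ × [n_k])` equals `N / D²`, where `N`
sums `∏(zᵢ - xᵢ + 1) - ∏(zᵢ - yᵢ + 1)` over all tuples with `xᵢ ≤ yᵢ ≤ zᵢ ≤ nᵢ`, and `D`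
sums `∏(nᵢ - xᵢ + 1) - 1` over all tuples with `xᵢ ≤ nᵢ`. -/
theorem codensity_pi_chain (k : ℕ) (hk : 1 ≤ k) (n : Fin k → ℕ) (hn : ∀ i, 1 ≤ n i) :
    codensity (TransferSystem (∀ i : Fin k, Fin (n i + 1))) =
      (∑ x : ∀ i : Fin k, Fin (n i + 1), ∑ y : ∀ i : Fin k, Fin (n i + 1),
          ∑ z : ∀ i : Fin k, Fin (n i + 1),
            if ∀ i, x i ≤ y i ∧ y i ≤ z i then
              (∏ i, (((z i : ℕ) : ℚ) - ((x i : ℕ) : ℚ) + 1)) -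
                ∏ i, (((z i : ℕ) : ℚ) - ((y i : ℕ) : ℚ) + 1)
            else 0) /
        (∑ x : ∀ i : Fin k, Fin (n i + 1),
          ((∏ i, ((n i : ℚ) - ((x i : ℕ) : ℚ) + 1)) - 1)) ^ 2 :=
  codensity_pi_chain_general k n
end
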